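/- Let λ > 0 and set λ* = √(λ² + 1) − λ. Define f(z) = (1/λ*) · (z + λ*)/(1 − λ* z). Then: (a) for every z ∈ ℂ with Re z = λ one has |f(z)| = 1/λ*²; and (b) for every z ∈ ℂ with |z + 1/(2λ)| = 1/(2λ) one has |f(z)| = 1. (The pole 1/λ* = λ + √(1 + λ²) of f lies on neither of these two boundary curves, so f is defined there.) -/

import Mathlib

/-!
Write `s = λ*`, the positive root of `s² + 2λs = 1`. On the line `Re z = λ` this relation reads
`1 - s z = s · conj (z + s)`, so `|z + s| / |1 - s z| = 1 / s`. The circle is `λ |z|² + Re z = 0`,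
and `|z + s|² - s² |1 - s z|² = (1 + s²) ((1 - s²) |z|² + 2 s Re z)`, which by the same relation
is a multiple of `λ |z|² + Re z`; so there `|z + s| / |1 - s z| = s`. The
denominator never vanishes, since `z + s` and `1 - s z` have no common zero.
-/

open Complex ComplexConjugate

variable {s l : ℝ} {z : ℂ}

theorem sqrt_sq_add_one_sub_pos (l : ℝ) : 0 < √(l ^ 2 + 1) - l := by
  have : |l| < √(l ^ 2 + 1) := by
    rw [← Real.sqrt_sq_eq_abs]
    exact Real.sqrt_lt_sqrt (sq_nonneg l) (lt_add_one _)
  linarith [le_abs_self l]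

theorem sqrt_sq_add_one_sub_sq_add (l : ℝ) :
    (√(l ^ 2 + 1) - l) ^ 2 + 2 * l * (√(l ^ 2 + 1) - l) = 1 := by
  have := Real.sq_sqrt (by positivity : (0 : ℝ) ≤ l ^ 2 + 1)
  linear_combination this

theorem one_sub_mul_ne_zero_of_add_eq_zero (h : z + s = 0) : 1 - s * z ≠ 0 := by
  rw [eq_neg_of_add_eq_zero_left h, mul_neg, sub_neg_eq_add, ← ofReal_mul, ← ofReal_one,
    ← ofReal_add, ofReal_ne_zero]
  nlinarith [sq_nonneg s]

theorem one_sub_mul_eq_mul_conj (hs : s ^ 2 + 2 * l * s = 1) (hz : z.re = l) :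
    1 - s * z = s * conj (z + s) := by
  apply Complex.ext
  · simp only [sub_re, one_re, re_ofReal_mul, ofReal_re, conj_re, add_re, hz]
    linear_combination -hs
  · simp

theorem normSq_add_two_mul_re_eq_zero {c : ℝ} (hz : ‖z + c‖ = c) :
    normSq z + 2 * c * z.re = 0 := by
  have h : normSq (z + c) = c ^ 2 := by rw [normSq_eq_norm_sq, hz]
  rw [normSq_add, normSq_ofReal, conj_ofReal, re_mul_ofReal] at h
  linear_combination h

theorem mul_normSq_add_re_eq_zero (hl : l ≠ 0) (hz : ‖z + 1 / (2 * l)‖ = 1 / (2 * l)) :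
    l * normSq z + z.re = 0 := by
  have h := normSq_add_two_mul_re_eq_zero (c := 1 / (2 * l)) (by push_cast; exact hz)
  field_simp at h
  linear_combination h

theorem norm_add_eq_mul_norm_one_sub_mul (hs : 0 ≤ s) (hsl : s ^ 2 + 2 * l * s = 1)
    (hz : l * normSq z + z.re = 0) : ‖z + s‖ = s * ‖1 - s * z‖ := by
  have hsq : normSq (z + s) = s ^ 2 * normSq (1 - s * z) := by
    rw [normSq_add, normSq_sub]
    simp only [normSq_ofReal, conj_ofReal, re_mul_ofReal, normSq_mul, map_one, one_mul, conj_re,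
      re_ofReal_mul]
    linear_combination (2 * s * (1 + s ^ 2)) * hz - ((1 + s ^ 2) * normSq z) * hsl
  rw [normSq_eq_norm_sq, normSq_eq_norm_sq, ← mul_pow] at hsq
  exact (pow_left_inj₀ (norm_nonneg _) (by positivity) two_ne_zero).1 hsq

/-- Boundary behaviour of the Möbius map `f(z) = (1/λ*) (z + λ*)/(1 - λ* z)` with
`λ* = √(λ² + 1) - λ`: it sends the vertical line `{Re z = λ}` to the circle
`{|w| = 1/λ*²}` and the circle `{|z + 1/(2λ)| = 1/(2λ)}` to the unit circle. -/
theorem moebius_boundary_behaviour (l : ℝ) (hl : 0 < l) :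
    (∀ z : ℂ, z.re = l →
      ‖((1 / ((Real.sqrt (l ^ 2 + 1) - l : ℝ) : ℂ)) *
          ((z + ((Real.sqrt (l ^ 2 + 1) - l : ℝ) : ℂ)) /
            (1 - ((Real.sqrt (l ^ 2 + 1) - l : ℝ) : ℂ) * z)))‖
        = 1 / (Real.sqrt (l ^ 2 + 1) - l) ^ 2) ∧
    (∀ z : ℂ, ‖z + 1 / (2 * l)‖ = 1 / (2 * l) →
      ‖((1 / ((Real.sqrt (l ^ 2 + 1) - l : ℝ) : ℂ)) *
          ((z + ((Real.sqrt (l ^ 2 + 1) - l : ℝ) : ℂ)) /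
            (1 - ((Real.sqrt (l ^ 2 + 1) - l : ℝ) : ℂ) * z)))‖
        = 1) := by
  set s := √(l ^ 2 + 1) - l
  have hs : 0 < s := sqrt_sq_add_one_sub_pos l
  have hsl : s ^ 2 + 2 * l * s = 1 := sqrt_sq_add_one_sub_sq_add l
  have hnorm (z : ℂ) :
      ‖1 / (s : ℂ) * ((z + s) / (1 - s * z))‖ = ‖z + s‖ / (s * ‖1 - s * z‖) := by
    rw [norm_mul, norm_div, norm_div, norm_one, norm_real, Real.norm_of_nonneg hs.le,
      div_mul_div_comm, one_mul]
  refine ⟨fun z hz => ?_, fun z hz => ?_⟩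
  · have hconj := one_sub_mul_eq_mul_conj hsl hz
    have hzs : z + s ≠ 0 := fun h ↦
      one_sub_mul_ne_zero_of_add_eq_zero h (by rw [hconj, h, map_zero, mul_zero])
    rw [hnorm, hconj, norm_mul, norm_conj, norm_real, Real.norm_of_nonneg hs.le]
    field_simp
  · have hcirc := norm_add_eq_mul_norm_one_sub_mul hs.le hsl (mul_normSq_add_re_eq_zero hl.ne' hz)
    have hden : 1 - s * z ≠ 0 := fun h ↦
      one_sub_mul_ne_zero_of_add_eq_zero (norm_eq_zero.1 (by rw [hcirc, h, norm_zero, mul_zero])) h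
    rw [hnorm, hcirc]
    field_simp
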